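/- Let θ(t) = (θ₀(t), θ₁(t), θ₂(t)) be a solution of the Kuramoto–Sakaguchi star network θ̇ᵢ = ω + A sin(θ₀ − θᵢ − α) for i = 1,2 and θ̇₀ = ω + Σ_{j=1}^2 A sin(θⱼ − θ₀ − α) + u, with A > 0, α ∈ (0, π/2), u ≥ 0. Define r = (1/2)√((Σ_{j=1}^2 cos(θ₀ − θⱼ))² + (Σ_{j=1}^2 sin(θ₀ − θⱼ))²), μ = 1 − r, and ζ = arctan((Σ_{j=1}^2 sin(θ₀ − θⱼ))/(Σ_{j=1}^2 cos(θ₀ − θⱼ))). Then along the solution, dμ/dt = −A(1 − (1 − μ)²)cos(ζ − α) and dζ/dt = u − A(1 − μ)(2 sin(ζ + α) + sin(ζ − α)). -/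

import Mathlib

/-!
Write x = θ₀ − θ₁, y = θ₀ − θ₂ and C + iS = e^{ix} + e^{iy} = 2r e^{iζ}; where C > 0 the angle
ζ = arctan(S / C) is the polar angle of C + iS. Differentiating in polar form gives
4 r r' = C C' + S S' and 4 r² ζ' = C S' − S C'. For the two phasors the first is
sin(y − x)(x' − y'), and in the star network x' − y' = A(sin(y − α) − sin(x − α)), which turns it
into 4 A r (1 − r²) cos(ζ − α). The second is 2 r² (x' + y'), so ζ' is the mean of x' and y';
since 2 r sin(ζ ± α) = sin(x ± α) + sin(y ± α), this mean is u − A r (2 sin(ζ + α) + sin(ζ − α)).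
-/

open Real

/-- r = (1/2)√((Σⱼcos(θ₀−θⱼ))² + (Σⱼsin(θ₀−θⱼ))²). -/
noncomputable def rFun (θ0 θ1 θ2 : ℝ → ℝ) (t : ℝ) : ℝ :=
  (1/2) * Real.sqrt ((Real.cos (θ0 t - θ1 t) + Real.cos (θ0 t - θ2 t))^2
    + (Real.sin (θ0 t - θ1 t) + Real.sin (θ0 t - θ2 t))^2)

/-- μ = 1 − r. -/
noncomputable def muFun (θ0 θ1 θ2 : ℝ → ℝ) (t : ℝ) : ℝ := 1 - rFun θ0 θ1 θ2 t

/-- ζ = arctan((Σⱼsin(θ₀−θⱼ))/(Σⱼcos(θ₀−θⱼ))). -/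
noncomputable def zetaFun (θ0 θ1 θ2 : ℝ → ℝ) (t : ℝ) : ℝ :=
  Real.arctan ((Real.sin (θ0 t - θ1 t) + Real.sin (θ0 t - θ2 t))
    / (Real.cos (θ0 t - θ1 t) + Real.cos (θ0 t - θ2 t)))

theorem sqrt_sq_add_sq_mul_cos_arctan_div {x : ℝ} (y : ℝ) (hx : 0 < x) :
    √(x ^ 2 + y ^ 2) * cos (arctan (y / x)) = x := by
  rw [cos_arctan, show 1 + (y / x) ^ 2 = (x ^ 2 + y ^ 2) / x ^ 2 by field_simp,
    sqrt_div' _ (sq_nonneg x), sqrt_sq hx.le]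
  have : 0 < √(x ^ 2 + y ^ 2) := sqrt_pos.2 (by positivity)
  field_simp

theorem sqrt_sq_add_sq_mul_sin_arctan_div {x : ℝ} (y : ℝ) (hx : 0 < x) :
    √(x ^ 2 + y ^ 2) * sin (arctan (y / x)) = y := by
  rw [sin_arctan, show 1 + (y / x) ^ 2 = (x ^ 2 + y ^ 2) / x ^ 2 by field_simp,
    sqrt_div' _ (sq_nonneg x), sqrt_sq hx.le]
  have : 0 < √(x ^ 2 + y ^ 2) := sqrt_pos.2 (by positivity)
  field_simp

theorem HasDerivAt.sqrt_sq_add_sq {f g : ℝ → ℝ} {f' g' t : ℝ} (hf : HasDerivAt f f' t)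
    (hg : HasDerivAt g g' t) (h : f t ^ 2 + g t ^ 2 ≠ 0) :
    HasDerivAt (fun s => √(f s ^ 2 + g s ^ 2))
      ((f t * f' + g t * g') / √(f t ^ 2 + g t ^ 2)) t := by
  refine (((hf.fun_pow 2).fun_add (hg.fun_pow 2)).sqrt h).congr_deriv ?_
  field_simp
  ring

theorem HasDerivAt.arctan_div {f g : ℝ → ℝ} {f' g' t : ℝ} (hf : HasDerivAt f f' t)
    (hg : HasDerivAt g g' t) (h : f t ≠ 0) :
    HasDerivAt (fun s => Real.arctan (g s / f s))
      ((f t * g' - g t * f') / (f t ^ 2 + g t ^ 2)) t := by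
  refine (hg.fun_div hf h).arctan.congr_deriv ?_
  field_simp

theorem hasDerivAt_hub_sub_leaf {θ0 θ1 θ2 θj : ℝ → ℝ} {A α u ω t : ℝ}
    (h0 : HasDerivAt θ0 (ω + (A * sin (θ1 t - θ0 t - α) + A * sin (θ2 t - θ0 t - α)) + u) t)
    (hj : HasDerivAt θj (ω + A * sin (θ0 t - θj t - α)) t) :
    HasDerivAt (fun s => θ0 s - θj s)
      (u - A * (sin (θ0 t - θ1 t + α) + sin (θ0 t - θ2 t + α)) - A * sin (θ0 t - θj t - α)) t := by
  refine (h0.fun_sub hj).congr_deriv ?_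
  rw [show θ1 t - θ0 t - α = -(θ0 t - θ1 t + α) by ring,
    show θ2 t - θ0 t - α = -(θ0 t - θ2 t + α) by ring, sin_neg, sin_neg]
  ring

section TwoPhasors

variable (x y : ℝ)

theorem twoPhasors_radial_rate (α A v : ℝ) :
    (cos x + cos y) * (-sin x * (v - A * sin (x - α)) + -sin y * (v - A * sin (y - α)))
      + (sin x + sin y) * (cos x * (v - A * sin (x - α)) + cos y * (v - A * sin (y - α)))
    = A * (2 - ((cos x + cos y) ^ 2 + (sin x + sin y) ^ 2) / 2)
      * ((cos x + cos y) * cos α + (sin x + sin y) * sin α) := by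
  rw [sin_sub, sin_sub]
  linear_combination
    A / 2 * ((cos x + 3 * cos y) * cos α + (sin x + 3 * sin y) * sin α) * sin_sq_add_cos_sq x
      + A / 2 * ((3 * cos x + cos y) * cos α + (3 * sin x + sin y) * sin α) * sin_sq_add_cos_sq y

theorem twoPhasors_angular_rate {a b : ℝ} (h : (cos x + cos y) ^ 2 + (sin x + sin y) ^ 2 ≠ 0) :
    ((cos x + cos y) * (cos x * a + cos y * b) - (sin x + sin y) * (-sin x * a + -sin y * b))
      / ((cos x + cos y) ^ 2 + (sin x + sin y) ^ 2) = (a + b) / 2 := by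
  rw [div_eq_iff h]
  linear_combination (a - b) / 2 * sin_sq_add_cos_sq x - (a - b) / 2 * sin_sq_add_cos_sq y

end TwoPhasors

theorem stmt_16_general (A α u ω : ℝ)
    (θ0 θ1 θ2 : ℝ → ℝ)
    (h1 : ∀ t : ℝ, HasDerivAt θ1 (ω + A * Real.sin (θ0 t - θ1 t - α)) t)
    (h2 : ∀ t : ℝ, HasDerivAt θ2 (ω + A * Real.sin (θ0 t - θ2 t - α)) t)
    (h0 : ∀ t : ℝ, HasDerivAt θ0
      (ω + (A * Real.sin (θ1 t - θ0 t - α) + A * Real.sin (θ2 t - θ0 t - α)) + u) t) :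
    ∀ t : ℝ, 0 < Real.cos (θ0 t - θ1 t) + Real.cos (θ0 t - θ2 t) →
      HasDerivAt (muFun θ0 θ1 θ2)
        (-A * (1 - (1 - muFun θ0 θ1 θ2 t)^2) * Real.cos (zetaFun θ0 θ1 θ2 t - α)) t ∧
      HasDerivAt (zetaFun θ0 θ1 θ2)
        (u - A * (1 - muFun θ0 θ1 θ2 t) *
          (2 * Real.sin (zetaFun θ0 θ1 θ2 t + α) + Real.sin (zetaFun θ0 θ1 θ2 t - α))) t := by
  intro t hC
  have hC' := (hasDerivAt_hub_sub_leaf (h0 t) (h1 t)).cos.fun_add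
    (hasDerivAt_hub_sub_leaf (h0 t) (h2 t)).cos
  have hS' := (hasDerivAt_hub_sub_leaf (h0 t) (h1 t)).sin.fun_add
    (hasDerivAt_hub_sub_leaf (h0 t) (h2 t)).sin
  set x := θ0 t - θ1 t
  set y := θ0 t - θ2 t
  have hQ : 0 < (cos x + cos y) ^ 2 + (sin x + sin y) ^ 2 := by positivity
  set R := √((cos x + cos y) ^ 2 + (sin x + sin y) ^ 2)
  set ζ := arctan ((sin x + sin y) / (cos x + cos y))
  have hR : 0 < R := sqrt_pos.2 hQ
  have hRsq : R ^ 2 = _ := sq_sqrt hQ.le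
  have hcos : R * cos ζ = cos x + cos y := sqrt_sq_add_sq_mul_cos_arctan_div _ hC
  have hsin : R * sin ζ = sin x + sin y := sqrt_sq_add_sq_mul_sin_arctan_div _ hC
  have hμ : muFun θ0 θ1 θ2 t = 1 - R / 2 := by rw [muFun, rFun]; ring
  have hζ : zetaFun θ0 θ1 θ2 t = ζ := rfl
  constructor
  · refine (((hC'.sqrt_sq_add_sq hS' hQ.ne').const_mul (1 / 2)).const_sub 1).congr_deriv ?_
    rw [twoPhasors_radial_rate, hμ, hζ, cos_sub ζ, ← hRsq, sqrt_sq hR.le, ← hcos, ← hsin]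
    field_simp
    ring
  · refine (hC'.arctan_div hS' hC.ne').congr_deriv ?_
    rw [twoPhasors_angular_rate _ _ hQ.ne', hμ, hζ, sin_add ζ, sin_sub ζ, sin_add x, sin_add y,
      sin_sub x, sin_sub y]
    linear_combination (3 * A / 2 * cos α) * hsin + (A / 2 * sin α) * hcos

/-- Along solutions of the Kuramoto–Sakaguchi star network with detuning u, on the
region where ζ is a well-defined polar angle, one has
dμ/dt = −A(1 − (1−μ)²)cos(ζ−α) and dζ/dt = u − A(1−μ)(2 sin(ζ+α) + sin(ζ−α)). -/
theorem stmt_16 (A α u ω : ℝ) (hA : 0 < A) (hα : α ∈ Set.Ioo 0 (π / 2))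
    (hu : 0 ≤ u) (hω : 0 < ω)
    (θ0 θ1 θ2 : ℝ → ℝ)
    (h1 : ∀ t : ℝ, HasDerivAt θ1 (ω + A * Real.sin (θ0 t - θ1 t - α)) t)
    (h2 : ∀ t : ℝ, HasDerivAt θ2 (ω + A * Real.sin (θ0 t - θ2 t - α)) t)
    (h0 : ∀ t : ℝ, HasDerivAt θ0
      (ω + (A * Real.sin (θ1 t - θ0 t - α) + A * Real.sin (θ2 t - θ0 t - α)) + u) t) :
    ∀ t : ℝ, 0 < Real.cos (θ0 t - θ1 t) + Real.cos (θ0 t - θ2 t) →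
      HasDerivAt (muFun θ0 θ1 θ2)
        (-A * (1 - (1 - muFun θ0 θ1 θ2 t)^2) * Real.cos (zetaFun θ0 θ1 θ2 t - α)) t ∧
      HasDerivAt (zetaFun θ0 θ1 θ2)
        (u - A * (1 - muFun θ0 θ1 θ2 t) *
          (2 * Real.sin (zetaFun θ0 θ1 θ2 t + α) + Real.sin (zetaFun θ0 θ1 θ2 t - α))) t :=
  stmt_16_general A α u ω θ0 θ1 θ2 h1 h2 h0
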